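/- arXiv:1810.11765 — 6 statements merged into one kernel-verified Lean document; each statement's English description precedes it below -/
import Mathlib

section
/- Consider a valid flip sequence on a container of 64 bits, and a higher-level bit b that is initially consistent with the container, i.e., b equals the indicator that at least one container bit is true in the initial state. Let SF and CL be the numbers of set-first and clear-last operations in the sequence. Then b + (SF − CL) lies in {0, 1}, and b + (SF − CL) equals the indicator that at least one container bit is true in the final state. Hence the multiset of SF set operations and CL clear operations generated for the higher-level bit is legal with respect to b, and after these generated operations are executed the higher-level bit is again consistent with the container. -/
/-!
The disjunction of the container bits changes under a flip only when the flip is set-first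
(it goes from 0 to 1) or clear-last (from 1 to 0). Hence `b + SF - CL` telescopes to the
disjunction of the final state, and since the initial and final disjunctions both lie in
`{0, 1}`, so do the claimed ranges.
-/

/-- Apply an operation `o = (pos, b)` to a container state `s`: set bit `pos` to `b`
(`b = true` corresponds to a set operation, `b = false` to a clear operation). -/
def applyOp (s : Fin 64 → Bool) (o : Fin 64 × Bool) : Fin 64 → Bool :=
  Function.update s o.1 o.2

/-- `ValidFlipSeq s ops` means that the sequence of operations `ops`, applied in
order to the container with initial state `s`, actually flips each designated bit. -/
def ValidFlipSeq : (Fin 64 → Bool) → List (Fin 64 × Bool) → Prop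
  | _, [] => True
  | s, o :: rest => s o.1 = !o.2 ∧ ValidFlipSeq (applyOp s o) rest

/-- The final state of the container after applying all operations in order. -/
def finalState (s : Fin 64 → Bool) (ops : List (Fin 64 × Bool)) : Fin 64 → Bool :=
  ops.foldl applyOp s

/-- The number of set-first operations in the sequence: set operations performed
when, immediately before, all 64 bits of the container are false. -/
def countSetFirst : (Fin 64 → Bool) → List (Fin 64 × Bool) → ℕ
  | _, [] => 0
  | s, o :: rest =>
      (if o.2 = true ∧ ∀ i, s i = false then 1 else 0) + countSetFirst (applyOp s o) rest

/-- The number of clear-last operations in the sequence: clear operations after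
which, immediately, all 64 bits of the container are false. -/
def countClearLast : (Fin 64 → Bool) → List (Fin 64 × Bool) → ℕ
  | _, [] => 0
  | s, o :: rest =>
      (if o.2 = false ∧ ∀ i, applyOp s o i = false then 1 else 0) +
        countClearLast (applyOp s o) rest

def orIndicator {ι : Type*} [Fintype ι] (s : ι → Bool) : ℤ :=
  if ∃ i, s i = true then 1 else 0

theorem orIndicator_eq_ite {ι : Type*} [Fintype ι] (s : ι → Bool) [Decidable (∃ i, s i = true)] :
    orIndicator s = if ∃ i, s i = true then 1 else 0 := by
  unfold orIndicator
  congr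

theorem orIndicator_eq_zero_or_one {ι : Type*} [Fintype ι] (s : ι → Bool) :
    orIndicator s = 0 ∨ orIndicator s = 1 := by
  unfold orIndicator
  split_ifs <;> simp

theorem orIndicator_update_of_flip {ι : Type*} [Fintype ι] [DecidableEq ι] (s : ι → Bool) (i : ι)
    (v : Bool) [Decidable (∀ j, s j = false)] [Decidable (∀ j, Function.update s i v j = false)]
    (hflip : s i = !v) :
    orIndicator (Function.update s i v) =
      orIndicator s + (if v = true ∧ ∀ j, s j = false then 1 else 0)
        - (if v = false ∧ ∀ j, Function.update s i v j = false then 1 else 0) := by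
  unfold orIndicator
  cases v
  · have hs : ∃ j, s j = true := ⟨i, by simpa using hflip⟩
    by_cases hu : ∃ j, Function.update s i false j = true
    · have hu' : ¬∀ j, Function.update s i false j = false := fun h ↦ by
        obtain ⟨j, hj⟩ := hu
        simp [h j] at hj
      simp [hs, hu, hu']
    · simp_all
  · have hu : ∃ j, Function.update s i true j = true := ⟨i, by simp⟩
    by_cases hs : ∃ j, s j = true <;> simp_all

theorem orIndicator_add_countSetFirst_sub_countClearLast :
    ∀ (s : Fin 64 → Bool) (ops : List (Fin 64 × Bool)), ValidFlipSeq s ops →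
      orIndicator s + countSetFirst s ops - countClearLast s ops =
        orIndicator (finalState s ops)
  | _, [], _ => by simp [countSetFirst, countClearLast, finalState]
  | s, o :: rest, ⟨hflip, hrest⟩ => by
    have ih := orIndicator_add_countSetFirst_sub_countClearLast (applyOp s o) rest hrest
    have hstep : orIndicator (applyOp s o) =
        orIndicator s + (if o.2 = true ∧ ∀ i, s i = false then 1 else 0)
          - (if o.2 = false ∧ ∀ i, applyOp s o i = false then 1 else 0) :=
      orIndicator_update_of_flip s o.1 o.2 hflip
    have hfinal : finalState s (o :: rest) = finalState (applyOp s o) rest := rfl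
    simp only [countSetFirst, countClearLast, hfinal]
    push_cast
    linarith

/-- Consider a valid flip sequence on a container of 64 bits, and a higher-level
bit `b` that is initially consistent with the container (it equals the indicator
that at least one container bit is true in the initial state). With `SF` and `CL`
the numbers of set-first and clear-last operations: `SF − CL ∈ {-1, 0, 1}` (so the
generated multiset of `SF` sets and `CL` clears is legal w.r.t. `b`),
`b + (SF − CL) ∈ {0, 1}`, and `b + (SF − CL)` equals the indicator that at least
one container bit is true in the final state (so the higher-level bit is again
consistent after executing the generated operations). -/
theorem stmt2 (s : Fin 64 → Bool) (ops : List (Fin 64 × Bool)) (b : Bool)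
    (h : ValidFlipSeq s ops)
    (hcons : (b.toNat : ℤ) = (if ∃ i, s i = true then (1 : ℤ) else 0)) :
    ((countSetFirst s ops : ℤ) - (countClearLast s ops : ℤ) ∈ ({-1, 0, 1} : Set ℤ)) ∧
    ((b.toNat : ℤ) + ((countSetFirst s ops : ℤ) - (countClearLast s ops : ℤ))
        ∈ ({0, 1} : Set ℤ)) ∧
    ((b.toNat : ℤ) + ((countSetFirst s ops : ℤ) - (countClearLast s ops : ℤ))
        = (if ∃ i, finalState s ops i = true then (1 : ℤ) else 0)) := by
  have hb : (b.toNat : ℤ) = orIndicator s := hcons.trans (orIndicator_eq_ite s).symm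
  have key := orIndicator_add_countSetFirst_sub_countClearLast s ops h
  have final : (b.toNat : ℤ) + (countSetFirst s ops - countClearLast s ops) =
      orIndicator (finalState s ops) := by rw [hb, ← key]; ring
  refine ⟨?_, ?_, final.trans (orIndicator_eq_ite _)⟩
  · rcases orIndicator_eq_zero_or_one s with h0 | h0 <;>
      rcases orIndicator_eq_zero_or_one (finalState s ops) with h1 | h1 <;>
      simp only [Set.mem_insert_iff, Set.mem_singleton_iff] <;> omega
  · rw [final]
    rcases orIndicator_eq_zero_or_one (finalState s ops) with h1 | h1 <;> simp [h1]
end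

section
/- Let L : ℕ and let v₀ : ℕ → Bool be the bits of a level-0 bitmap. Define the higher-level bitmaps recursively by v_{l+1}(i) = ⋁_{k < 64} v_l(64·i + k) for each l < L and i : ℕ. Then for every l ≤ L and every index i, v_l(i) = true if and only if there exists j < 64^l such that v₀(64^l · i + j) = true. In particular, a top-down traversal of a consistent hierarchical bitmap that descends only into containers whose higher-level bit is set finds a set level-0 bit if and only if one exists in the corresponding subtree. -/
/-!
Induction on the level. Writing an offset `j < b ^ l * b` as `b ^ l * k + j'` with `k < b` and
`j' < b ^ l`, the level-0 subtree below container `i` at level `l + 1` is the disjoint union of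
the subtrees below its `b` children `b * i + k` at level `l`.
-/

theorem Nat.exists_lt_mul_iff {m n : ℕ} {p : ℕ → Prop} :
    (∃ j < m * n, p j) ↔ ∃ k < n, ∃ j < m, p (m * k + j) := by
  constructor
  · rintro ⟨j, hj, hpj⟩
    have hm : 0 < m := Nat.pos_of_mul_pos_right (Nat.zero_lt_of_lt hj)
    exact ⟨j / m, Nat.div_lt_of_lt_mul hj, j % m, Nat.mod_lt j hm, by rwa [Nat.div_add_mod]⟩
  · rintro ⟨k, hk, j, hj, hpj⟩
    exact ⟨m * k + j, Nat.mul_comm n m ▸ Nat.mul_add_lt_mul_of_lt_of_lt hk hj, hpj⟩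

def IsHierarchicalBitmap (b L : ℕ) (v : ℕ → ℕ → Bool) : Prop :=
  ∀ l < L, ∀ i : ℕ, (v (l + 1) i = true ↔ ∃ k < b, v l (b * i + k) = true)

theorem IsHierarchicalBitmap.apply_eq_true_iff {b L : ℕ} {v : ℕ → ℕ → Bool}
    (hv : IsHierarchicalBitmap b L v) :
    ∀ l ≤ L, ∀ i : ℕ, (v l i = true ↔ ∃ j < b ^ l, v 0 (b ^ l * i + j) = true) := by
  intro l
  induction l with
  | zero => simp
  | succ l ih =>
    intro hl i
    calc v (l + 1) i = true
        ↔ ∃ k < b, ∃ j < b ^ l, v 0 (b ^ l * (b * i + k) + j) = true := by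
          rw [hv l hl i]
          exact exists_congr fun k => and_congr_right fun _ => ih (Nat.le_of_succ_le hl) _
      _ ↔ ∃ j < b ^ (l + 1), v 0 (b ^ (l + 1) * i + j) = true := by
          rw [pow_succ, Nat.exists_lt_mul_iff]
          refine exists_congr fun k => and_congr_right fun _ => exists_congr fun j => ?_
          ring_nf

/-- Hierarchical bitmap consistency: let `v l` be the level-`l` bitmap (level 0 is
the bit array `v₀`), where for every level `l < L`, bit `i` of level `l + 1` is the
disjunction of the 64 bits `64·i, …, 64·i + 63` of level `l`. Then for every
`l ≤ L` and every index `i`, bit `i` at level `l` is set if and only if some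
level-0 bit `64^l · i + j` with `j < 64^l` is set: a top-down traversal that
descends only into containers whose higher-level bit is set finds a set level-0
bit iff one exists in the corresponding subtree. -/
theorem stmt3 (L : ℕ) (v : ℕ → ℕ → Bool)
    (hrec : ∀ l < L, ∀ i : ℕ,
      (v (l + 1) i = true ↔ ∃ k < 64, v l (64 * i + k) = true)) :
    ∀ l ≤ L, ∀ i : ℕ,
      (v l i = true ↔ ∃ j < 64 ^ l, v 0 (64 ^ l * i + j) = true) :=
  IsHierarchicalBitmap.apply_eq_true_iff hrec
end

section
/- Let O be a legal multiset of set/clear operations on a finite family of Boolean bits with initial state v, and suppose O is nonempty. Then some operation in O is applicable to v (i.e., O contains a set operation on a bit whose current value is false, or a clear operation on a bit whose current value is true). Moreover, after applying any applicable operation of O and removing it from O, the remaining multiset is legal with respect to the resulting state. -/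
/-!
Legality only constrains the level `v k + S(k)` of each bit to lie in `{0, 1}`: the bound on
`S(k)` alone follows because `v k ∈ {0, 1}`. Applying an applicable operation on bit `k` moves
`v k` and `S(k)` by opposite amounts, so every level is unchanged. An operation of `O` that is not
applicable already finds its bit at its target value, and then the bound on the level forces an
opposite operation on the same bit to be in `O`; that one is applicable.
-/

/-- A multiset `O` of set/clear operations (an operation `(k, b)` sets bit `k` to
`b`; `b = true` is a set, `b = false` is a clear) on a family of bits with state
`v` is legal if for every bit `k` the set-surplus
`S(k) = (#set ops on k) − (#clear ops on k)`, as an integer, lies in `{-1, 0, 1}`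
and `v k + S(k) ∈ {0, 1}` (identifying `false` with 0 and `true` with 1). -/
def Legal {ι : Type*} [DecidableEq ι] (O : Multiset (ι × Bool)) (v : ι → Bool) : Prop :=
  ∀ k : ι,
    ((O.count (k, true) : ℤ) - (O.count (k, false) : ℤ) ∈ ({-1, 0, 1} : Set ℤ)) ∧
    (((v k).toNat : ℤ) + ((O.count (k, true) : ℤ) - (O.count (k, false) : ℤ))
        ∈ ({0, 1} : Set ℤ))

def surplus {ι : Type*} [DecidableEq ι] (O : Multiset (ι × Bool)) (k : ι) : ℤ :=
  O.count (k, true) - O.count (k, false)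

section

variable {ι : Type*} [DecidableEq ι] {O : Multiset (ι × Bool)} {v : ι → Bool}

theorem surplus_erase_of_ne {j k : ι} (b : Bool) (h : j ≠ k) :
    surplus (O.erase (k, b)) j = surplus O j := by
  simp [surplus, Multiset.count_erase_of_ne, h]

theorem surplus_erase_self_add {k : ι} {b : Bool} (h : (k, b) ∈ O) :
    surplus (O.erase (k, b)) k + b.toNat = surplus O k + (!b).toNat := by
  have hpos := Multiset.one_le_count_iff_mem.mpr h
  cases b <;> simp [surplus, Multiset.count_erase_of_ne] at hpos ⊢ <;> omega

theorem legal_iff : Legal O v ↔ ∀ k, ((v k).toNat : ℤ) + surplus O k ∈ ({0, 1} : Set ℤ) := by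
  refine ⟨fun hO k => (hO k).2, fun hO k => ⟨?_, hO k⟩⟩
  have hv := Bool.toNat_le (v k)
  have hk := hO k
  simp only [surplus, Set.mem_insert_iff, Set.mem_singleton_iff] at hk ⊢
  omega

theorem Legal.erase_of_apply {k : ι} {b : Bool} (hO : Legal O v) (hmem : (k, b) ∈ O)
    (hk : v k = !b) : Legal (O.erase (k, b)) (Function.update v k b) := by
  rw [legal_iff] at hO ⊢
  intro j
  by_cases hj : j = k
  · subst hj
    have hlevel := surplus_erase_self_add hmem
    rw [Function.update_self]
    convert hO j using 1
    rw [hk]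
    linarith
  · rw [Function.update_of_ne hj, surplus_erase_of_ne b hj]
    exact hO j

theorem Legal.mem_not_of_mem {k : ι} {b : Bool} (hO : Legal O v) (hmem : (k, b) ∈ O)
    (hk : v k = b) : (k, !b) ∈ O := by
  have hpos := Multiset.one_le_count_iff_mem.mpr hmem
  rw [← Multiset.one_le_count_iff_mem]
  have hlevel := (hO k).2
  simp only [Set.mem_insert_iff, Set.mem_singleton_iff] at hlevel
  cases b <;> simp [hk] at hlevel hpos ⊢ <;> omega

end

theorem stmt4_general {ι : Type*} [DecidableEq ι]
    (O : Multiset (ι × Bool)) (v : ι → Bool) (hO : Legal O v) (hne : O ≠ 0) :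
    (∃ op ∈ O, v op.1 = !op.2) ∧
    (∀ op ∈ O, v op.1 = !op.2 →
      Legal (O.erase op) (Function.update v op.1 op.2)) := by
  refine ⟨?_, fun ⟨k, b⟩ hmem hk => hO.erase_of_apply hmem hk⟩
  obtain ⟨⟨k, b⟩, hmem⟩ := Multiset.exists_mem_of_ne_zero hne
  by_cases hk : v k = !b
  · exact ⟨(k, b), hmem, hk⟩
  · have hvk : v k = b := by simpa using hk
    exact ⟨(k, !b), hO.mem_not_of_mem hmem hvk, by simp [hvk]⟩

/-- Let `O` be a nonempty legal multiset of set/clear operations on a finite family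
of Boolean bits with initial state `v`. Then some operation in `O` is applicable
to `v` (it actually flips its designated bit: a set on a currently-false bit or a
clear on a currently-true bit). Moreover, after applying any applicable operation
of `O` and removing it from `O`, the remaining multiset is legal with respect to
the resulting state. -/
theorem stmt4 {ι : Type*} [Fintype ι] [DecidableEq ι]
    (O : Multiset (ι × Bool)) (v : ι → Bool) (hO : Legal O v) (hne : O ≠ 0) :
    (∃ op ∈ O, v op.1 = !op.2) ∧
    (∀ op ∈ O, v op.1 = !op.2 →
      Legal (O.erase op) (Function.update v op.1 op.2)) :=
  stmt4_general O v hO hne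
end

section
/- Let N, n, r be natural numbers with 0 < N, 0 < n and N ∣ n. Then the map (tid, k) ↦ (⌊(tid + k·n) / N⌋, tid mod N), defined on the set D = {(tid, k) ∈ ℕ × ℕ | tid < n ∧ tid + k·n < r·N}, is a bijection from D onto the set {(j, p) ∈ ℕ × ℕ | j < r ∧ p < N}. That is, when the block capacity divides the number of threads, every object slot of every allocated block is processed by exactly one (thread, iteration) pair of the parallel do-all assignment. -/
/-! The assignment factors through the linear index `tid + k·n`. Division with remainder by `n`
identifies the admissible pairs `(tid, k)` with the indices below `r·N`, and division with
remainder by `N` identifies those with the pairs `(block, slot)`. Since `N ∣ n`, the slot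
`(tid + k·n) % N` is just `tid % N`. -/

theorem Nat.add_mul_mod_of_dvd {N n : ℕ} (h : N ∣ n) (a b : ℕ) : (a + b * n) % N = a % N := by
  simp [Nat.add_mod, Nat.mul_mod, Nat.mod_eq_zero_of_dvd h]

theorem Nat.bijOn_divMod (N r : ℕ) :
    Set.BijOn (fun m : ℕ => (m / N, m % N)) (Set.Iio (r * N)) {q : ℕ × ℕ | q.1 < r ∧ q.2 < N} := by
  refine ⟨fun m (hm : m < r * N) => ?_, fun m _ m' _ h => ?_, fun q ⟨hj, hp⟩ => ?_⟩
  · have hN : 0 < N := Nat.pos_of_mul_pos_left (Nat.zero_lt_of_lt hm)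
    exact ⟨Nat.div_lt_of_lt_mul (by rwa [Nat.mul_comm]), Nat.mod_lt m hN⟩
  · simp only [Prod.mk.injEq] at h
    rw [← Nat.div_add_mod m N, ← Nat.div_add_mod m' N, h.1, h.2]
  · refine ⟨q.1 * N + q.2, show _ < r * N by nlinarith, ?_⟩
    have hN : 0 < N := Nat.zero_lt_of_lt hp
    ext
    · simp [Nat.add_div_of_dvd_right, hN, Nat.div_eq_of_lt hp]
    · simp [Nat.mod_eq_of_lt hp]

theorem Nat.bijOn_add_mul {n : ℕ} (hn : 0 < n) (M : ℕ) :
    Set.BijOn (fun p : ℕ × ℕ => p.1 + p.2 * n) {p | p.1 < n ∧ p.1 + p.2 * n < M} (Set.Iio M) := by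
  refine ⟨fun p hp => hp.2, fun p hp p' hp' h => ?_, fun m (hm : m < M) => ?_⟩
  · have hfst : p.1 = p'.1 := by
      simpa [Nat.add_mul_mod_self_right, Nat.mod_eq_of_lt hp.1, Nat.mod_eq_of_lt hp'.1]
        using congrArg (· % n) h
    refine Prod.ext hfst (Nat.eq_of_mul_eq_mul_right hn ?_)
    simp only at h
    omega
  · exact ⟨(m % n, m / n), ⟨Nat.mod_lt m hn, by rwa [Nat.mod_add_div']⟩, Nat.mod_add_div' m n⟩

theorem stmt8_general (N n r : ℕ) (hn : 0 < n) (hdvd : N ∣ n) :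
    Set.BijOn (fun p : ℕ × ℕ => ((p.1 + p.2 * n) / N, p.1 % N))
      {p : ℕ × ℕ | p.1 < n ∧ p.1 + p.2 * n < r * N}
      {q : ℕ × ℕ | q.1 < r ∧ q.2 < N} := by
  have hfactor : (fun p : ℕ × ℕ => ((p.1 + p.2 * n) / N, p.1 % N)) =
      (fun m => (m / N, m % N)) ∘ fun p : ℕ × ℕ => p.1 + p.2 * n := by
    ext p <;> simp [Nat.add_mul_mod_of_dvd hdvd]
  rw [hfactor]
  exact (Nat.bijOn_divMod N r).comp (Nat.bijOn_add_mul hn _)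

/-- Let `N, n, r : ℕ` with `0 < N`, `0 < n` and `N ∣ n`. Then the map
`(tid, k) ↦ ((tid + k·n) / N, tid % N)` is a bijection from
`D = {(tid, k) | tid < n ∧ tid + k·n < r·N}` onto `{(j, p) | j < r ∧ p < N}`:
when the block capacity divides the number of threads, every object slot of every
allocated block is processed by exactly one (thread, iteration) pair of the
parallel do-all assignment. -/
theorem stmt8 (N n r : ℕ) (hN : 0 < N) (hn : 0 < n) (hdvd : N ∣ n) :
    Set.BijOn (fun p : ℕ × ℕ => ((p.1 + p.2 * n) / N, p.1 % N))
      {p : ℕ × ℕ | p.1 < n ∧ p.1 + p.2 * n < r * N}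
      {q : ℕ × ℕ | q.1 < r ∧ q.2 < N} :=
  stmt8_general N n r hn hdvd
end

section
/- Let b be a natural number and let 1 ≤ i ≤ popCount b, where popCount b is the number of indices j with Nat.testBit b j = true. Let g : ℕ → ℕ be the map g(x) = x &&& (x − 1). Then g^[i−1](b) ≠ 0, and the index of the least significant set bit of g^[i−1](b) equals the i-th smallest element of the (finite) set {j : ℕ | Nat.testBit b j = true}. That is, applying x ← x &&& (x − 1) a total of i − 1 times and then taking the least set bit yields the position of the i-th set bit of b. -/
/-!
If `l` is the lowest set bit of `x`, then `x - 1` agrees with `x` above bit `l`, has bit `l`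
cleared and all bits below `l` set; hence `x &&& (x - 1)` is `x` with its lowest set bit
removed. By induction, after `k` steps the set bits of `b` that survive are exactly those at
positions `≥ nth k`, where `nth k` is the `k`-th set bit of `b` (counting from `0`), so the
lowest surviving bit is `nth k`.
-/

/-- `popCount b` is the number of indices `j` with `Nat.testBit b j = true`. -/
noncomputable def popCount (b : ℕ) : ℕ := {j : ℕ | b.testBit j = true}.ncard

namespace Nat

theorem finite_setOf_testBit (n : ℕ) : {j | n.testBit j = true}.Finite :=
  n.bitIndices.finite_toSet.subset fun _ hj => mem_bitIndices.2 hj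

theorem testBit_and_sub_one {x l : ℕ} (hl : IsLeast {j | x.testBit j = true} l) (j : ℕ) :
    (x &&& (x - 1)).testBit j = (x.testBit j && decide (j ≠ l)) := by
  have hlow : x % 2 ^ (l + 1) = 2 ^ l := by
    refine eq_of_testBit_eq fun k => ?_
    rw [testBit_mod_two_pow, testBit_two_pow]
    rcases lt_trichotomy k l with hk | rfl | hk
    · have : x.testBit k = false := Bool.eq_false_iff.2 fun h => (hl.2 h).not_gt hk
      simp [this, hk.ne']
    · simpa using hl.1
    · simp [show ¬k < l + 1 by omega, hk.ne]
  obtain ⟨q, hx⟩ : ∃ q, x = 2 ^ (l + 1) * q + 2 ^ l := ⟨_, by rw [← hlow, div_add_mod]⟩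
  have hx1 : x - 1 = 2 ^ (l + 1) * q + (2 ^ l - 1) := by
    have : 0 < 2 ^ l := by positivity
    omega
  have hpow : 2 ^ l < 2 ^ (l + 1) := pow_lt_pow_right₀ one_lt_two (lt_add_one l)
  rw [testBit_and, hx1, hx, testBit_two_pow_mul_add _ hpow, testBit_two_pow_mul_add _ (by omega)]
  split_ifs with hj
  · simp only [testBit_two_pow, testBit_two_pow_sub_one]
    rcases eq_or_ne j l with rfl | hjl
    · simp
    · simp [hjl.symm]
  · simp [show j ≠ l by omega]

theorem nth_succ_le_iff {p : ℕ → Prop} {k j : ℕ}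
    (hk : ∀ hf : (Set.ofPred p).Finite, k + 1 < hf.toFinset.card) (hj : p j) :
    nth p (k + 1) ≤ j ↔ nth p k ≤ j ∧ j ≠ nth p k := by
  constructor
  · intro h
    have := nth_lt_nth' (lt_add_one k) hk
    omega
  · rintro ⟨hle, hne⟩
    by_contra! hlt
    exact hne (le_antisymm (le_nth_of_lt_nth_succ hlt hj) hle)

end Nat

theorem popCount_eq_card_toFinset (b : ℕ) :
    popCount b = (Nat.finite_setOf_testBit b).toFinset.card :=
  Set.ncard_eq_toFinset_card _ _

theorem testBit_iterate_and_sub_one_iff {b k : ℕ} (hk : k < popCount b) (j : ℕ) :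
    ((fun x : ℕ => x &&& (x - 1))^[k] b).testBit j = true ↔
      b.testBit j = true ∧ Nat.nth (fun j => b.testBit j = true) k ≤ j := by
  set p : ℕ → Prop := fun j => b.testBit j = true
  rw [popCount_eq_card_toFinset] at hk
  induction k generalizing j with
  | zero =>
    simp only [Function.iterate_zero, id_eq, Nat.nth_zero, iff_self_and]
    exact fun hj => Nat.sInf_le hj
  | succ k ih =>
    have hk' := Nat.lt_of_succ_lt hk
    have ih : ∀ j, _ ↔ _ := fun j => ih hk' j
    have hleast : IsLeast {j | ((fun x : ℕ => x &&& (x - 1))^[k] b).testBit j = true}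
        (Nat.nth p k) :=
      ⟨(ih _).2 ⟨Nat.nth_mem_of_lt_card _ hk', le_rfl⟩, fun j hj => ((ih j).1 hj).2⟩
    rw [Function.iterate_succ_apply', Nat.testBit_and_sub_one hleast, Bool.and_eq_true, ih,
      decide_eq_true_iff, and_assoc]
    exact and_congr_right fun hj => (Nat.nth_succ_le_iff (fun _ => hk) hj).symm

/-- Let `1 ≤ i ≤ popCount b` and `g x = x &&& (x − 1)`. Then `g^[i−1] b ≠ 0`, and
the index of the least significant set bit of `g^[i−1] b` (i.e., the least element
of its set of set-bit indices) equals the `i`-th smallest element of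
`{j | Nat.testBit b j = true}` (the `(i−1)`-th in 0-indexed counting, `Nat.nth`):
applying `x ← x &&& (x − 1)` a total of `i − 1` times and then taking the least
set bit yields the position of the `i`-th set bit of `b`. -/
theorem stmt10 (b i : ℕ) (h1 : 1 ≤ i) (h2 : i ≤ popCount b) :
    (fun x : ℕ => x &&& (x - 1))^[i - 1] b ≠ 0 ∧
    IsLeast {j : ℕ | Nat.testBit ((fun x : ℕ => x &&& (x - 1))^[i - 1] b) j = true}
      (Nat.nth (fun j : ℕ => Nat.testBit b j = true) (i - 1)) := by
  have hi : i - 1 < popCount b := by omega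
  have hbits := testBit_iterate_and_sub_one_iff hi
  have hnth : Nat.testBit b (Nat.nth (fun j => b.testBit j = true) (i - 1)) = true :=
    Nat.nth_mem_of_lt_card _ (popCount_eq_card_toFinset b ▸ hi)
  have hleast := And.intro ((hbits _).2 ⟨hnth, le_rfl⟩) fun j hj => ((hbits j).1 hj).2
  exact ⟨fun h0 => by simp [h0] at hleast, hleast⟩
end

section
/- Let b be a natural number with b < 2^64 and b ≠ 2^64 − 1, and let m = (2^64 − 1) ^^^ b be the bitwise complement of b within 64 bits. Then m ≠ 0, and the index pos of the least significant set bit of m satisfies: pos < 64, Nat.testBit b pos = false, and Nat.testBit b q = true for every q < pos. That is, applying find-first-set to the 64-bit complement of a non-full object allocation bitmap returns the smallest free slot position. -/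
namespace Nat

theorem two_pow_sub_one_xor_ne_zero {n b : ℕ} (hb : b ≠ 2 ^ n - 1) : (2 ^ n - 1) ^^^ b ≠ 0 :=
  fun h => hb (xor_eq_zero_iff.mp h).symm

theorem testBit_two_pow_sub_one_xor {n b : ℕ} (hb : b < 2 ^ n) (j : ℕ) :
    ((2 ^ n - 1) ^^^ b).testBit j = (decide (j < n) && !b.testBit j) := by
  rw [testBit_xor, testBit_two_pow_sub_one]
  by_cases hj : j < n
  · simp [hj]
  · simp [hj, testBit_lt_two_pow (hb.trans_le (pow_le_pow_right₀ one_le_two (not_lt.mp hj)))]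

theorem testBit_sInf_testBit {m : ℕ} (hm : m ≠ 0) :
    m.testBit (sInf {j | m.testBit j = true}) = true :=
  sInf_mem (exists_testBit_of_ne_zero hm)

theorem testBit_eq_false_of_lt_sInf_testBit {m q : ℕ}
    (hq : q < sInf {j | m.testBit j = true}) : m.testBit q = false :=
  eq_false_of_ne_true (notMem_of_lt_sInf hq)

end Nat

/-- Let `b < 2^64` with `b ≠ 2^64 − 1`, and let `m = (2^64 − 1) ^^^ b` be the
bitwise complement of `b` within 64 bits. Then `m ≠ 0`, and the index `pos` of the
least significant set bit of `m` (here `sInf {j | Nat.testBit m j = true}`)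
satisfies `pos < 64`, `Nat.testBit b pos = false`, and `Nat.testBit b q = true`
for every `q < pos`: find-first-set applied to the 64-bit complement of a
non-full object allocation bitmap returns the smallest free slot position. -/
theorem stmt14 (b : ℕ) (hb : b < 2 ^ 64) (hb' : b ≠ 2 ^ 64 - 1) :
    (2 ^ 64 - 1) ^^^ b ≠ 0 ∧
    sInf {j : ℕ | Nat.testBit ((2 ^ 64 - 1) ^^^ b) j = true} < 64 ∧
    Nat.testBit b (sInf {j : ℕ | Nat.testBit ((2 ^ 64 - 1) ^^^ b) j = true}) = false ∧
    ∀ q < sInf {j : ℕ | Nat.testBit ((2 ^ 64 - 1) ^^^ b) j = true},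
      Nat.testBit b q = true := by
  have hm := Nat.two_pow_sub_one_xor_ne_zero hb'
  have hpos := Nat.testBit_sInf_testBit hm
  rw [Nat.testBit_two_pow_sub_one_xor hb, Bool.and_eq_true, decide_eq_true_iff,
    Bool.not_eq_true'] at hpos
  refine ⟨hm, hpos.1, hpos.2, fun q hq => ?_⟩
  have hbelow := Nat.testBit_eq_false_of_lt_sInf_testBit hq
  rw [Nat.testBit_two_pow_sub_one_xor hb, decide_eq_true (hq.trans hpos.1)] at hbelow
  simpa using hbelow
end
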